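/- For every odd integer n ≥ 3, the limit as w → 1 of the expression (w-1)(w+1)^2 + w + (w^2-1)·[ Σ_{i=2}^{(n-1)/2} (w-1)/(w^{i+1}-1) + w/(w^{(n+3)/2}-1) + Σ_{i=1}^{(n-1)/2} (w-1)/((w^{i+1}-1)(w^{i+2}-1)) ] equals 2. -/

import Mathlib

/-!
Write `q m w = (w - 1) / (w ^ m - 1)`, the reciprocal of the geometric sum `1 + w + ⋯ + w ^ (m - 1)`,
so `q m → 1 / m` as `w → 1`. With `k = (n - 1) / 2`, the factor `w ^ 2 - 1 = (w - 1) (w + 1)` kills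
the first sum, turns `w / (w ^ (k + 2) - 1)` into `w (w + 1) q (k + 2) → 2 / (k + 2)`, and turns the
last sum into `∑ (w + 1) q (i + 1) q (i + 2) → ∑ 2 / ((i + 1) (i + 2))`, which telescopes to
`1 - 2 / (k + 2)`. Together with the value `1` of the polynomial part, the limit is `2`.
-/

open Filter Topology Finset

theorem tendsto_sub_one_div_pow_sub_one {𝕜 : Type*} [NormedField 𝕜] [CharZero 𝕜] {m : ℕ}
    (hm : m ≠ 0) :
    Tendsto (fun w : 𝕜 => (w - 1) / (w ^ m - 1)) (𝓝[≠] 1) (𝓝 (m : 𝕜)⁻¹) := by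
  have hgeom : Tendsto (fun w : 𝕜 => (∑ j ∈ range m, w ^ j)⁻¹) (𝓝 1) (𝓝 (m : 𝕜)⁻¹) := by
    have hne : ∑ j ∈ range m, (1 : 𝕜) ^ j ≠ 0 := by simpa using hm
    simpa using ((continuous_finsetSum _ fun j _ => continuous_pow j).tendsto (1 : 𝕜)).inv₀ hne
  refine (hgeom.mono_left nhdsWithin_le_nhds).congr' ?_
  filter_upwards [self_mem_nhdsWithin] with w hw
  rw [geom_sum_eq hw, inv_div]

theorem sum_Icc_two_div_add_one_mul_add_two (k : ℕ) :
    ∑ i ∈ Icc 1 k, (2 : ℝ) / ((i + 1) * (i + 2)) = 1 - 2 / (k + 2) := by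
  induction k with
  | zero => norm_num
  | succ k ih =>
    rw [sum_Icc_succ_top (by omega), ih]
    push_cast
    field_simp
    ring

theorem tendsto_estr_An (k : ℕ) :
    Tendsto (fun w : ℝ =>
      (w - 1) * (w + 1) ^ 2 + w
        + (w ^ 2 - 1) *
            ((∑ i ∈ Icc 2 k, (w - 1) / (w ^ (i + 1) - 1))
              + w / (w ^ (k + 2) - 1)
              + ∑ i ∈ Icc 1 k, (w - 1) / ((w ^ (i + 1) - 1) * (w ^ (i + 2) - 1))))
      (𝓝[≠] 1) (𝓝 2) := by
  have hq : ∀ m : ℕ, Tendsto (fun w : ℝ => (w - 1) / (w ^ (m + 1) - 1)) (𝓝[≠] 1)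
      (𝓝 ((m : ℝ) + 1)⁻¹) := fun m => by
    simpa using tendsto_sub_one_div_pow_sub_one (𝕜 := ℝ) m.succ_ne_zero
  have hcont : ∀ {f : ℝ → ℝ}, Continuous f → Tendsto f (𝓝[≠] 1) (𝓝 (f 1)) :=
    fun hf => hf.continuousAt.tendsto.mono_left nhdsWithin_le_nhds
  have hpoly := hcont (f := fun w : ℝ => (w - 1) * (w + 1) ^ 2 + w) (by fun_prop)
  have hsq := hcont (f := fun w : ℝ => w ^ 2 - 1) (by fun_prop)
  have hsucc := hcont (f := fun w : ℝ => w + 1) (by fun_prop)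
  have hfirst := hsq.mul (tendsto_finsetSum (Icc 2 k) fun i _ => hq i)
  have hmiddle := (hsucc.mul (hcont (f := fun w : ℝ => w) continuous_id')).mul (hq (k + 1))
  have hlast := tendsto_finsetSum (Icc 1 k) fun i _ => (hsucc.mul (hq i)).mul (hq (i + 1))
  have hlim := ((hpoly.add hfirst).add hmiddle).add hlast
  have hvalue : (1 - 1) * (1 + 1) ^ 2 + 1 + (1 ^ 2 - 1) * ∑ i ∈ Icc 2 k, ((i : ℝ) + 1)⁻¹
      + (1 + 1) * 1 * ((k + 1 : ℕ) + 1 : ℝ)⁻¹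
      + ∑ i ∈ Icc 1 k, (1 + 1) * ((i : ℝ) + 1)⁻¹ * ((i + 1 : ℕ) + 1 : ℝ)⁻¹ = 2 := by
    have htele := sum_Icc_two_div_add_one_mul_add_two k
    have hsum : ∑ i ∈ Icc 1 k, (1 + 1) * ((i : ℝ) + 1)⁻¹ * ((i + 1 : ℕ) + 1 : ℝ)⁻¹
        = ∑ i ∈ Icc 1 k, (2 : ℝ) / ((i + 1) * (i + 2)) :=
      sum_congr rfl fun i _ => by push_cast; field_simp; ring
    rw [hsum, htele]
    push_cast
    field_simp
    ring
  rw [hvalue] at hlim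
  refine hlim.congr fun w => ?_
  have hlast_eq : ∑ i ∈ Icc 1 k, (w + 1) * ((w - 1) / (w ^ (i + 1) - 1))
        * ((w - 1) / (w ^ (i + 1 + 1) - 1))
      = (w ^ 2 - 1) * ∑ i ∈ Icc 1 k, (w - 1) / ((w ^ (i + 1) - 1) * (w ^ (i + 2) - 1)) := by
    rw [mul_sum]
    exact sum_congr rfl fun i _ => by rw [mul_assoc, div_mul_div_comm]; ring
  rw [hlast_eq]
  ring

theorem estr_An_odd_general (n : ℕ) (hn : 3 ≤ n) :
    Tendsto (fun w : ℝ =>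
      (w - 1) * (w + 1) ^ 2 + w
        + (w ^ 2 - 1) *
            ((∑ i ∈ Finset.Icc 2 ((n - 1) / 2), (w - 1) / (w ^ (i + 1) - 1))
              + w / (w ^ ((n + 3) / 2) - 1)
              + ∑ i ∈ Finset.Icc 1 ((n - 1) / 2),
                  (w - 1) / ((w ^ (i + 1) - 1) * (w ^ (i + 2) - 1))))
      (𝓝[≠] 1) (𝓝 2) := by
  rw [show (n + 3) / 2 = (n - 1) / 2 + 2 by omega]
  exact tendsto_estr_An _

theorem estr_An_odd (n : ℕ) (hn : 3 ≤ n) (hodd : Odd n) :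
    Tendsto (fun w : ℝ =>
      (w - 1) * (w + 1) ^ 2 + w
        + (w ^ 2 - 1) *
            ((∑ i ∈ Finset.Icc 2 ((n - 1) / 2), (w - 1) / (w ^ (i + 1) - 1))
              + w / (w ^ ((n + 3) / 2) - 1)
              + ∑ i ∈ Finset.Icc 1 ((n - 1) / 2),
                  (w - 1) / ((w ^ (i + 1) - 1) * (w ^ (i + 2) - 1))))
      (𝓝[≠] 1) (𝓝 2) :=
  estr_An_odd_general n hn
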